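/- arXiv:1012.1297 — 4 statements merged into one kernel-verified Lean document; each statement's English description precedes it below -/
import Mathlib

section
/- Condition SE implies Condition RE: if the minimal m-sparse eigenvalue φ_min(m) of a symmetric positive semidefinite p×p matrix M satisfies φ_min((1+⌈(1+C)²·c⌉)s) ≥ κ' > 0 and φ_max(m') ≤ κ'' for appropriate sparse eigenvalue bounds, then the restricted eigenvalue κ_C² = min_{δ∈Δ_C} s·(δ'Mδ)/‖δ_T‖_1² is bounded below by a positive constant depending only on C, κ', κ''. In particular, for any δ ≠ 0 with ‖δ_{T^c}‖_1 ≤ C‖δ_T‖_1 and |T| = s, one has δ'Mδ ≥ κ̃²‖δ‖_2² for some κ̃ > 0 depending only on C, κ', κ''. -/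
/-!
Write `δ = u + w`, where `u` is `δ` on `T` and on the `m = k s` largest coordinates of `Tᶜ`,
with `k = ⌈(1 + C)² κ''/κ'⌉`. Cutting the rest of `Tᶜ` into consecutive blocks of `m`
coordinates in decreasing order, every entry of a block is at most the `ℓ¹`-average of the
previous block, so the `ℓ²` norms of the blocks add up to at most
`‖δ_{Tᶜ}‖₁ / √m ≤ C √(s/m) ‖u‖₂`. With `M = AᵀA`, the lower sparse eigenvalue bound gives
`‖A u‖ ≥ √κ' ‖u‖`, and the upper one `‖A w‖ ≤ √κ'' C √(s/m) ‖u‖ ≤ C/(1+C) · √κ' ‖u‖` by the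
choice of `m`; hence `‖A δ‖ ≥ √κ' ‖u‖ / (1 + C) ≥ √κ' ‖δ‖ / (1 + C)²`.
-/

open Matrix Finset WithLp

section SparseBlocks

variable {ι : Type*}

theorem exists_subset_card_eq_min_forall_le {α : Type*} [DecidableEq ι] [LinearOrder α]
    (f : ι → α) (m : ℕ) (S : Finset ι) :
    ∃ P ⊆ S, #P = min m #S ∧ ∀ i ∈ S \ P, ∀ j ∈ P, f i ≤ f j := by
  induction m generalizing S with
  | zero => exact ⟨∅, empty_subset _, by simp, by simp⟩
  | succ m ih =>
    rcases S.eq_empty_or_nonempty with rfl | hS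
    · exact ⟨∅, empty_subset _, by simp, by simp⟩
    obtain ⟨j₀, hj₀, hmax⟩ := S.exists_max_image f hS
    obtain ⟨P, hPS, hPcard, hPle⟩ := ih (S.erase j₀)
    have hj₀P : j₀ ∉ P := fun h => notMem_erase j₀ S (hPS h)
    refine ⟨insert j₀ P, insert_subset hj₀ (hPS.trans (erase_subset _ _)), ?_, ?_⟩
    · rw [card_insert_of_notMem hj₀P, hPcard, card_erase_of_mem hj₀]
      have := card_pos.2 hS
      omega
    · intro i hi j hj
      rw [mem_sdiff, mem_insert, not_or] at hi
      rcases mem_insert.1 hj with rfl | hj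
      · exact hmax i hi.1
      · exact hPle i (mem_sdiff.2 ⟨mem_erase.2 ⟨hi.2.1, hi.1⟩, hi.2.2⟩) j hj

theorem exists_subset_card_eq_min_forall_mul_abs_le_sum [DecidableEq ι]
    (δ : ι → ℝ) (m : ℕ) (S : Finset ι) :
    ∃ P ⊆ S, #P = min m #S ∧ ∀ i ∈ S \ P, m * |δ i| ≤ ∑ j ∈ P, |δ j| := by
  obtain ⟨P, hPS, hPcard, hle⟩ := exists_subset_card_eq_min_forall_le (|δ ·|) m S
  refine ⟨P, hPS, hPcard, fun i hi => ?_⟩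
  have hPm : #P = m := by
    have := card_lt_card (LE.le.ssubset_of_not_superset hPS
      fun h => (mem_sdiff.1 hi).2 (h (mem_sdiff.1 hi).1))
    omega
  calc (m : ℝ) * |δ i| = ∑ _j ∈ P, |δ i| := by rw [sum_const, hPm, nsmul_eq_mul]
    _ ≤ ∑ j ∈ P, |δ j| := sum_le_sum (hle i hi)

variable [Fintype ι]

theorem norm_toLp_sq (v : ι → ℝ) : ‖toLp 2 v‖ ^ 2 = ∑ i, v i ^ 2 := by
  simp [EuclideanSpace.real_norm_sq_eq]

theorem norm_toLp_indicator_sq (S : Finset ι) (v : ι → ℝ) :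
    ‖toLp 2 ((S : Set ι).indicator v)‖ ^ 2 = ∑ i ∈ S, v i ^ 2 := by
  rw [norm_toLp_sq, ← sum_indicator_subset _ (subset_univ S)]
  refine sum_congr rfl fun i _ => ?_
  by_cases h : i ∈ S <;> simp [h]

theorem norm_toLp_indicator_le_of_subset {S S' : Finset ι} (h : S ⊆ S') (v : ι → ℝ) :
    ‖toLp 2 ((S : Set ι).indicator v)‖ ≤ ‖toLp 2 ((S' : Set ι).indicator v)‖ := by
  rw [← pow_le_pow_iff_left₀ (norm_nonneg _) (norm_nonneg _) two_ne_zero,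
    norm_toLp_indicator_sq, norm_toLp_indicator_sq]
  exact sum_le_sum_of_subset_of_nonneg h fun i _ _ => sq_nonneg _

theorem norm_toLp_indicator_le {S : Finset ι} {v : ι → ℝ} {c : ℝ} (hc : 0 ≤ c)
    (h : ∀ i ∈ S, |v i| ≤ c) : ‖toLp 2 ((S : Set ι).indicator v)‖ ≤ √(#S : ℝ) * c := by
  rw [← Real.sqrt_sq (norm_nonneg _), norm_toLp_indicator_sq, ← Real.sqrt_sq hc,
    ← Real.sqrt_mul (Nat.cast_nonneg _)]
  refine Real.sqrt_le_sqrt ?_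
  calc ∑ i ∈ S, v i ^ 2 ≤ ∑ _i ∈ S, c ^ 2 :=
        sum_le_sum fun i hi => by simpa using pow_le_pow_left₀ (abs_nonneg _) (h i hi) 2
    _ = #S * c ^ 2 := by rw [sum_const, nsmul_eq_mul]

theorem sum_abs_le_sqrt_card_mul_norm_toLp_indicator (S : Finset ι) (v : ι → ℝ) :
    ∑ i ∈ S, |v i| ≤ √(#S : ℝ) * ‖toLp 2 ((S : Set ι).indicator v)‖ := by
  rw [← Real.sqrt_sq (norm_nonneg _), norm_toLp_indicator_sq, ← Real.sqrt_mul (Nat.cast_nonneg _)]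
  exact Real.le_sqrt_of_sq_le
    (by simpa using sq_sum_le_card_mul_sum_sq (s := S) (f := fun i => |v i|))

theorem sq_sum_abs_le_card_mul_sum_sq (S : Finset ι) (v : ι → ℝ) :
    (∑ i ∈ S, |v i|) ^ 2 ≤ #S * ∑ i, v i ^ 2 :=
  calc (∑ i ∈ S, |v i|) ^ 2 ≤ #S * ∑ i ∈ S, v i ^ 2 := by
        simpa using sq_sum_le_card_mul_sum_sq (s := S) (f := fun i => |v i|)
    _ ≤ #S * ∑ i, v i ^ 2 := mul_le_mul_of_nonneg_left
        (sum_le_sum_of_subset_of_nonneg (subset_univ S) fun i _ _ => sq_nonneg (v i))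
        (Nat.cast_nonneg _)

theorem card_support_indicator_le (S : Finset ι) (v : ι → ℝ) :
    #{i | (S : Set ι).indicator v i ≠ 0} ≤ #S :=
  card_le_card fun i hi => by
    simp only [mem_filter, mem_univ, true_and, Set.indicator_apply_ne_zero] at hi
    exact hi.1

variable [DecidableEq ι] {E : Type*} [SeminormedAddCommGroup E]

/-- Induction on `S`: the block of the `m` largest entries of `S` has entries at most `B / m`,
hence `ℓ²` norm at most `B / √m`, and every other entry is at most the `ℓ¹` norm of that block
over `m`, which is the hypothesis for the rest of `S`. -/
theorem norm_map_indicator_le_of_sparse (f : (ι → ℝ) →+ E) {b : ℝ} (hb : 0 ≤ b) {m : ℕ}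
    (hm : 0 < m) (hf : ∀ v : ι → ℝ, #{i | v i ≠ 0} ≤ m → ‖f v‖ ≤ b * ‖toLp 2 v‖)
    (δ : ι → ℝ) (S : Finset ι) {B : ℝ} (hB : 0 ≤ B) (hSB : ∀ i ∈ S, m * |δ i| ≤ B) :
    ‖f ((S : Set ι).indicator δ)‖ ≤ b * ((B + ∑ i ∈ S, |δ i|) / √m) := by
  induction S using Finset.strongInduction generalizing B with
  | _ S ih =>
  rcases S.eq_empty_or_nonempty with rfl | hS
  · simp only [coe_empty, Set.indicator_empty', map_zero, norm_zero, sum_empty, add_zero]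
    exact mul_nonneg hb (by positivity)
  have hm' : (0 : ℝ) < m := by exact_mod_cast hm
  obtain ⟨P, hPS, hPcard, hPtail⟩ := exists_subset_card_eq_min_forall_mul_abs_le_sum δ m S
  have hPm : #P ≤ m := hPcard ▸ min_le_left _ _
  have hP : P.Nonempty := card_pos.1 (hPcard ▸ lt_min hm (card_pos.2 hS))
  have hsplit : (S : Set ι).indicator δ =
      (P : Set ι).indicator δ + ((S \ P : Finset ι) : Set ι).indicator δ := by
    ext i
    have := @hPS i
    by_cases hi : i ∈ P <;> by_cases hiS : i ∈ S <;> simp_all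
  have hhead : ‖toLp 2 ((P : Set ι).indicator δ)‖ ≤ B / √m :=
    calc ‖toLp 2 ((P : Set ι).indicator δ)‖ ≤ √(#P : ℝ) * (B / m) :=
          norm_toLp_indicator_le (by positivity) fun i hi => by
            rw [le_div_iff₀ hm', mul_comm]; exact hSB i (hPS hi)
      _ ≤ √m * (B / m) := by gcongr
      _ = B / √m := by
          field_simp
          rw [Real.sq_sqrt hm'.le, mul_comm]
  have htail := ih (S \ P) (sdiff_ssubset hPS hP) (sum_nonneg fun _ _ => abs_nonneg _) hPtail
  calc ‖f ((S : Set ι).indicator δ)‖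
      ≤ ‖f ((P : Set ι).indicator δ)‖ + ‖f (((S \ P : Finset ι) : Set ι).indicator δ)‖ := by
        rw [hsplit, map_add]; exact norm_add_le _ _
    _ ≤ b * (B / √m) + b * ((∑ j ∈ P, |δ j| + ∑ i ∈ S \ P, |δ i|) / √m) :=
        add_le_add ((hf _ ((card_support_indicator_le P δ).trans hPm)).trans
          (mul_le_mul_of_nonneg_left hhead hb)) htail
    _ = b * ((B + ∑ i ∈ S, |δ i|) / √m) := by rw [← sum_sdiff hPS]; ring

theorem sub_mul_norm_le_of_sparse_bounds (f : (ι → ℝ) →+ E) {a b C : ℝ} {s m : ℕ}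
    (hb : 0 ≤ b) (hC : 0 ≤ C) (hm : 0 < m)
    (hlow : ∀ v : ι → ℝ, #{i | v i ≠ 0} ≤ s + m → a * ‖toLp 2 v‖ ≤ ‖f v‖)
    (hup : ∀ v : ι → ℝ, #{i | v i ≠ 0} ≤ m → ‖f v‖ ≤ b * ‖toLp 2 v‖)
    {T : Finset ι} (hT : #T ≤ s) {δ : ι → ℝ} (hδ : ∑ i ∈ Tᶜ, |δ i| ≤ C * ∑ i ∈ T, |δ i|) :
    (a - b * (C * √(s / m))) * ‖toLp 2 δ‖ ≤ (1 + C * √(s / m)) * ‖f δ‖ := by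
  set θ := C * √((s : ℝ) / m) with hθ
  obtain ⟨T₁, hT₁, hT₁card, hT₁tail⟩ := exists_subset_card_eq_min_forall_mul_abs_le_sum δ m Tᶜ
  set u := ((T ∪ T₁ : Finset ι) : Set ι).indicator δ
  set w := ((Tᶜ \ T₁ : Finset ι) : Set ι).indicator δ
  have hδuw : δ = u + w := by
    ext i
    have := @hT₁ i
    by_cases hi : i ∈ T <;> by_cases hi₁ : i ∈ T₁ <;> simp_all [u, w]
  have hρ : (∑ i ∈ Tᶜ, |δ i|) / √m ≤ θ * ‖toLp 2 u‖ :=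
    calc (∑ i ∈ Tᶜ, |δ i|) / √m ≤ C * (√(s : ℝ) * ‖toLp 2 u‖) / √m := by
          gcongr
          refine hδ.trans (mul_le_mul_of_nonneg_left ?_ hC)
          exact (sum_abs_le_sqrt_card_mul_norm_toLp_indicator T δ).trans
            (mul_le_mul (Real.sqrt_le_sqrt (by exact_mod_cast hT))
              (norm_toLp_indicator_le_of_subset subset_union_left δ) (norm_nonneg _)
              (Real.sqrt_nonneg _))
      _ = θ * ‖toLp 2 u‖ := by rw [hθ, Real.sqrt_div' _ (Nat.cast_nonneg _)]; ring
  have hB : 0 ≤ ∑ j ∈ T₁, |δ j| := sum_nonneg fun _ _ => abs_nonneg _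
  have hsum : ∑ j ∈ T₁, |δ j| + ∑ i ∈ Tᶜ \ T₁, |δ i| = ∑ i ∈ Tᶜ, |δ i| := by
    rw [add_comm, sum_sdiff hT₁]
  have hw : ‖toLp 2 w‖ ≤ θ * ‖toLp 2 u‖ := by
    have := norm_map_indicator_le_of_sparse (WithLp.addEquiv 2 (ι → ℝ)).symm.toAddMonoidHom
      zero_le_one hm (fun v _ => (one_mul _).ge) δ _ hB hT₁tail
    rw [hsum, one_mul] at this
    exact this.trans hρ
  have hfw : ‖f w‖ ≤ b * (θ * ‖toLp 2 u‖) := by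
    have := norm_map_indicator_le_of_sparse f hb hm hup δ _ hB hT₁tail
    rw [hsum] at this
    exact this.trans (mul_le_mul_of_nonneg_left hρ hb)
  have hu : (a - b * θ) * ‖toLp 2 u‖ ≤ ‖f δ‖ := by
    have hfu := hlow u ((card_support_indicator_le _ δ).trans
      ((card_union_le T T₁).trans (add_le_add hT (hT₁card ▸ min_le_left _ _))))
    have : ‖f u‖ ≤ ‖f δ‖ + ‖f w‖ := by
      rw [show u = δ - w by rw [hδuw, add_sub_cancel_right], map_sub]; exact norm_sub_le _ _
    linarith
  have hδu : ‖toLp 2 δ‖ ≤ (1 + θ) * ‖toLp 2 u‖ := by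
    rw [hδuw, toLp_add]; linarith [norm_add_le (toLp 2 u) (toLp 2 w)]
  rcases le_or_gt (a - b * θ) 0 with h | h
  · exact (mul_nonpos_of_nonpos_of_nonneg h (norm_nonneg _)).trans (by positivity)
  · calc (a - b * θ) * ‖toLp 2 δ‖ ≤ (a - b * θ) * ((1 + θ) * ‖toLp 2 u‖) := by gcongr
      _ = (1 + θ) * ((a - b * θ) * ‖toLp 2 u‖) := by ring
      _ ≤ (1 + θ) * ‖f δ‖ := by gcongr

theorem div_one_add_sq_mul_norm_le_of_sparse_bounds (f : (ι → ℝ) →+ E) {a b C : ℝ} {s m : ℕ}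
    (ha : 0 ≤ a) (hb : 0 ≤ b) (hC : 0 ≤ C) (hm : 0 < m) (hsm : s ≤ m)
    (hab : b ^ 2 * (1 + C) ^ 2 * s ≤ a ^ 2 * m)
    (hlow : ∀ v : ι → ℝ, #{i | v i ≠ 0} ≤ s + m → a * ‖toLp 2 v‖ ≤ ‖f v‖)
    (hup : ∀ v : ι → ℝ, #{i | v i ≠ 0} ≤ m → ‖f v‖ ≤ b * ‖toLp 2 v‖)
    {T : Finset ι} (hT : #T ≤ s) {δ : ι → ℝ} (hδ : ∑ i ∈ Tᶜ, |δ i| ≤ C * ∑ i ∈ T, |δ i|) :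
    a / (1 + C) ^ 2 * ‖toLp 2 δ‖ ≤ ‖f δ‖ := by
  have key := sub_mul_norm_le_of_sparse_bounds f hb hC hm hlow hup hT hδ
  set r := √((s : ℝ) / m)
  have hm' : (0 : ℝ) < m := by exact_mod_cast hm
  have hr : r ≤ 1 := Real.sqrt_le_one.2 (div_le_one_of_le₀ (by exact_mod_cast hsm) hm'.le)
  have hbr : b * r * (1 + C) ≤ a := by
    rw [← pow_le_pow_iff_left₀ (by positivity) ha two_ne_zero, mul_pow, mul_pow,
      Real.sq_sqrt (by positivity)]
    calc b ^ 2 * (s / m) * (1 + C) ^ 2 = b ^ 2 * (1 + C) ^ 2 * s / m := by ring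
      _ ≤ a ^ 2 := by rwa [div_le_iff₀ hm']
  have ha : a / (1 + C) ≤ a - b * (C * r) := by
    rw [div_le_iff₀ (by positivity)]
    nlinarith
  calc a / (1 + C) ^ 2 * ‖toLp 2 δ‖ = a / (1 + C) * ‖toLp 2 δ‖ / (1 + C) := by
        field_simp
    _ ≤ (a - b * (C * r)) * ‖toLp 2 δ‖ / (1 + C) := by gcongr
    _ ≤ (1 + C * r) * ‖f δ‖ / (1 + C) := by gcongr
    _ ≤ (1 + C) * ‖f δ‖ / (1 + C) := by gcongr; nlinarith
    _ = ‖f δ‖ := by field_simp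

end SparseBlocks

open scoped MatrixOrder in
theorem Matrix.PosSemidef.exists_dotProduct_mulVec_eq_norm_sq {n : Type*} [Fintype n]
    [DecidableEq n] {M : Matrix n n ℝ} (hM : M.PosSemidef) :
    ∃ A : Matrix n n ℝ, ∀ v : n → ℝ, v ⬝ᵥ M *ᵥ v = ‖toLp 2 (A *ᵥ v)‖ ^ 2 := by
  obtain ⟨A, rfl⟩ := CStarAlgebra.nonneg_iff_eq_star_mul_self.mp hM.nonneg
  refine ⟨A, fun v => ?_⟩
  rw [norm_toLp_sq, star_eq_conjTranspose, ← mulVec_mulVec, dotProduct_mulVec,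
    vecMul_conjTranspose]
  simp [dotProduct, sq]

theorem le_mul_ceil_div (x : ℝ) {y : ℝ} (hy : 0 < y) : x ≤ y * ⌈x / y⌉₊ :=
  (div_le_iff₀' hy).1 (Nat.le_ceil _)

section SquareRoot

variable {n : Type*} [Fintype n] {M A : Matrix n n ℝ} {κ : ℝ} {v : n → ℝ}

theorem sqrt_mul_norm_le_of_mul_sum_sq_le
    (hA : ∀ x : n → ℝ, x ⬝ᵥ M *ᵥ x = ‖toLp 2 (A *ᵥ x)‖ ^ 2) (h : κ * ∑ i, v i ^ 2 ≤ v ⬝ᵥ M *ᵥ v) :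
    √κ * ‖toLp 2 v‖ ≤ ‖toLp 2 (A *ᵥ v)‖ :=
  calc √κ * ‖toLp 2 v‖ = √(κ * ‖toLp 2 v‖ ^ 2) := by
        rw [Real.sqrt_mul' _ (sq_nonneg _), Real.sqrt_sq (norm_nonneg _)]
    _ ≤ √(‖toLp 2 (A *ᵥ v)‖ ^ 2) := Real.sqrt_le_sqrt (by rwa [← hA, norm_toLp_sq])
    _ = ‖toLp 2 (A *ᵥ v)‖ := Real.sqrt_sq (norm_nonneg _)

theorem norm_le_sqrt_mul_of_le_mul_sum_sq
    (hA : ∀ x : n → ℝ, x ⬝ᵥ M *ᵥ x = ‖toLp 2 (A *ᵥ x)‖ ^ 2) (h : v ⬝ᵥ M *ᵥ v ≤ κ * ∑ i, v i ^ 2) :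
    ‖toLp 2 (A *ᵥ v)‖ ≤ √κ * ‖toLp 2 v‖ := by
  rw [← Real.sqrt_sq (norm_nonneg (toLp 2 v)), ← Real.sqrt_mul' _ (sq_nonneg _)]
  exact Real.le_sqrt_of_sq_le (by rwa [← hA, norm_toLp_sq])

end SquareRoot

/-- Condition SE implies Condition RE: sparse eigenvalue bounds (with sparsity level
`(1 + ⌈(1+C)² (κ''/κ')⌉) s`) imply a restricted eigenvalue bound with a constant `κ̃`
depending only on `C, κ', κ''`: for every `δ ≠ 0` in the restricted set `Δ_C`,
`κ̃² ‖δ‖₂² ≤ δ'Mδ` and `κ̃² ‖δ_T‖₁² ≤ s · δ'Mδ`. -/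
theorem stmt_3 (C κ' κ'' : ℝ) (hC : 0 < C) (hκ' : 0 < κ') (hκ'' : 0 < κ'') :
    ∃ κt > (0:ℝ), ∀ (p s : ℕ) (M : Matrix (Fin p) (Fin p) ℝ), M.PosSemidef →
      ∀ T : Finset (Fin p), T.card = s → 0 < s →
      (∀ δ : Fin p → ℝ,
          (Finset.univ.filter fun j => δ j ≠ 0).card ≤ (1 + ⌈(1+C)^2 * (κ''/κ')⌉₊) * s →
          κ' * ∑ j, δ j ^ 2 ≤ δ ⬝ᵥ M.mulVec δ) →
      (∀ δ : Fin p → ℝ,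
          (Finset.univ.filter fun j => δ j ≠ 0).card ≤ (1 + ⌈(1+C)^2 * (κ''/κ')⌉₊) * s →
          δ ⬝ᵥ M.mulVec δ ≤ κ'' * ∑ j, δ j ^ 2) →
      ∀ δ : Fin p → ℝ, δ ≠ 0 →
        (∑ j ∈ Tᶜ, |δ j|) ≤ C * ∑ j ∈ T, |δ j| →
        κt ^ 2 * ∑ j, δ j ^ 2 ≤ δ ⬝ᵥ M.mulVec δ ∧
        κt ^ 2 * (∑ j ∈ T, |δ j|) ^ 2 ≤ (s : ℝ) * (δ ⬝ᵥ M.mulVec δ) := by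
  refine ⟨√κ' / (1 + C) ^ 2, by positivity, ?_⟩
  intro p s M hM T hT hs hmin hmax δ _ hδ
  obtain ⟨A, hA⟩ := hM.exists_dotProduct_mulVec_eq_norm_sq
  set k := ⌈(1 + C) ^ 2 * (κ'' / κ')⌉₊
  have hk : 0 < k := Nat.one_le_ceil_iff.2 (by positivity)
  have hks : κ'' * (1 + C) ^ 2 * s ≤ κ' * ↑(k * s) := by
    have := le_mul_ceil_div ((1 + C) ^ 2 * κ'') hκ'
    rw [mul_div_assoc] at this
    push_cast
    nlinarith
  have hnorm : √κ' / (1 + C) ^ 2 * ‖toLp 2 δ‖ ≤ ‖toLp 2 (A *ᵥ δ)‖ :=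
    div_one_add_sq_mul_norm_le_of_sparse_bounds
      (AddMonoidHom.mk' (fun v => toLp 2 (A *ᵥ v)) fun u v => by simp [mulVec_add])
      (Real.sqrt_nonneg κ') (Real.sqrt_nonneg κ'') hC.le (Nat.mul_pos hk hs)
      (Nat.le_mul_of_pos_left s hk) (by rwa [Real.sq_sqrt hκ'.le, Real.sq_sqrt hκ''.le])
      (fun v hv => sqrt_mul_norm_le_of_mul_sum_sq_le hA (hmin v (by rwa [add_mul, one_mul])))
      (fun v hv => norm_le_sqrt_mul_of_le_mul_sum_sq hA
        (hmax v (hv.trans (Nat.mul_le_mul_right _ (Nat.le_add_left _ _)))))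
      hT.le hδ
  have hq : (√κ' / (1 + C) ^ 2) ^ 2 * ∑ j, δ j ^ 2 ≤ δ ⬝ᵥ M *ᵥ δ := by
    rw [hA, ← norm_toLp_sq, ← mul_pow]
    exact pow_le_pow_left₀ (by positivity) hnorm 2
  refine ⟨hq, ?_⟩
  calc (√κ' / (1 + C) ^ 2) ^ 2 * (∑ j ∈ T, |δ j|) ^ 2
      ≤ (√κ' / (1 + C) ^ 2) ^ 2 * (s * ∑ j, δ j ^ 2) := by
        gcongr
        exact hT ▸ sq_sum_abs_le_card_mul_sum_sq T δ
    _ = s * ((√κ' / (1 + C) ^ 2) ^ 2 * ∑ j, δ j ^ 2) := by ring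
    _ ≤ s * (δ ⬝ᵥ M *ᵥ δ) := mul_le_mul_of_nonneg_left hq (Nat.cast_nonneg s)
end

section
/- Basic LASSO inequality: let β̂ minimize Q̂(β) + (λ/n)‖β‖_1 where Q̂(β) = (1/n)∑_i (y_i - f_i'β)². Write y_i = f_i'β_0 + a_i + v_i with (1/n)∑_i a_i² ≤ c_s² and score S = (2/n)∑_i f_i v_i. If λ ≥ c·n‖S‖_∞ for some c > 1, then for δ = β̂ - β_0: ‖f_i'δ‖_{2,n}² ≤ (1+1/c)(λ/n)‖δ_T‖_1 - (1-1/c)(λ/n)‖δ_{T^c}‖_1 + 2c_s‖f_i'δ‖_{2,n}, where T = support(β_0) and ‖f_i'δ‖_{2,n}² = (1/n)∑_i (f_i'δ)². -/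
/-!
Compare the LASSO criterion at `β̂` with its value at `β₀`: expanding the squares leaves
`‖Fδ‖²_{2,n} ≤ (λ/n)(‖β₀‖₁ - ‖β̂‖₁) + (2/n)⟨a + v, Fδ⟩`. Off the support `T` of `β₀` the penalty
difference is `-|δ_j|`, on `T` it is at most `|δ_j|`; the approximation-error term is bounded by
Cauchy–Schwarz and the noise term `(2/n)⟨v, Fδ⟩ = ⟨S, δ⟩` by Hölder, `‖S‖_∞ ‖δ‖₁ ≤ (λ/(cn)) ‖δ‖₁`.
-/

open Finset Matrix

section

variable {ι κ : Type*} [Fintype ι] [Fintype κ]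

theorem sum_abs_sub_sum_abs_le_of_eq_zero_off [DecidableEq κ] (β₀ β : κ → ℝ) (T : Finset κ)
    (hT : ∀ j ∉ T, β₀ j = 0) :
    ∑ j, |β₀ j| - ∑ j, |β j| ≤ ∑ j ∈ T, |β j - β₀ j| - ∑ j ∈ Tᶜ, |β j - β₀ j| := by
  have hoff : ∀ j ∈ Tᶜ, |β₀ j| = 0 ∧ |β j| = |β j - β₀ j| := fun j hj => by
    simp [hT j (mem_compl.mp hj)]
  have hon : ∑ j ∈ T, |β₀ j| - ∑ j ∈ T, |β j| ≤ ∑ j ∈ T, |β j - β₀ j| := by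
    rw [← sum_sub_distrib]
    exact sum_le_sum fun j _ => (abs_sub_abs_le_abs_sub _ _).trans_eq (abs_sub_comm _ _)
  rw [← sum_add_sum_compl T, ← sum_add_sum_compl T (fun j => |β j|),
    sum_eq_zero fun j hj => (hoff j hj).1, sum_congr rfl fun j hj => (hoff j hj).2]
  linarith

theorem mul_sum_mul_le_mul_sqrt {w cs : ℝ} (a d : ι → ℝ) (hw : 0 ≤ w) (hcs : 0 ≤ cs)
    (ha : w * ∑ i, a i ^ 2 ≤ cs ^ 2) :
    w * ∑ i, a i * d i ≤ cs * √(w * ∑ i, d i ^ 2) := by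
  have hd : 0 ≤ w * ∑ i, d i ^ 2 := by positivity
  have hsq : (w * ∑ i, a i * d i) ^ 2 ≤ (cs * √(w * ∑ i, d i ^ 2)) ^ 2 := calc
    (w * ∑ i, a i * d i) ^ 2 = w ^ 2 * (∑ i, a i * d i) ^ 2 := by ring
    _ ≤ w ^ 2 * ((∑ i, a i ^ 2) * ∑ i, d i ^ 2) := by
      gcongr; exact sum_mul_sq_le_sq_mul_sq _ a d
    _ = (w * ∑ i, a i ^ 2) * (w * ∑ i, d i ^ 2) := by ring
    _ ≤ cs ^ 2 * (w * ∑ i, d i ^ 2) := by gcongr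
    _ = (cs * √(w * ∑ i, d i ^ 2)) ^ 2 := by rw [mul_pow, Real.sq_sqrt hd]
  exact le_of_sq_le_sq hsq (by positivity)

theorem dotProduct_le_iSup_abs_mul_sum_abs (x y : κ → ℝ) :
    x ⬝ᵥ y ≤ (⨆ j, |y j|) * ∑ j, |x j| := by
  rw [dotProduct, mul_sum]
  refine sum_le_sum fun j _ => ?_
  calc x j * y j ≤ |x j| * |y j| := abs_mul (x j) (y j) ▸ le_abs_self _
    _ ≤ |x j| * ⨆ k, |y k| := by
      gcongr; exact le_ciSup (Set.finite_range fun k => |y k|).bddAbove j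
    _ = (⨆ k, |y k|) * |x j| := mul_comm _ _

theorem mul_dotProduct_mulVec (F : Matrix ι κ ℝ) (v : ι → ℝ) (δ : κ → ℝ) (w : ℝ) :
    w * (v ⬝ᵥ F *ᵥ δ) = δ ⬝ᵥ fun j => w * ∑ i, F i j * v i := by
  rw [dotProduct_mulVec, dotProduct_comm, ← mulVec_transpose, ← smul_eq_mul, ← dotProduct_smul]
  rfl

def lassoCriterion (F : Matrix ι κ ℝ) (y : ι → ℝ) (w t : ℝ) (β : κ → ℝ) : ℝ :=
  w * ∑ i, (y i - (F *ᵥ β) i) ^ 2 + t * ∑ j, |β j|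

theorem mul_sum_sq_mulVec_sub_le_of_lassoCriterion_le (F : Matrix ι κ ℝ) (β₀ β : κ → ℝ)
    {y u : ι → ℝ} {w t : ℝ} (hy : y = F *ᵥ β₀ + u)
    (h : lassoCriterion F y w t β ≤ lassoCriterion F y w t β₀) :
    w * ∑ i, (F *ᵥ (β - β₀)) i ^ 2
      ≤ t * (∑ j, |β₀ j| - ∑ j, |β j|) + 2 * w * ∑ i, u i * (F *ᵥ (β - β₀)) i := by
  set d := F *ᵥ (β - β₀)
  have hres : ∀ i, y i - (F *ᵥ β) i = u i - d i := fun i => by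
    simp only [hy, d, mulVec_sub, Pi.add_apply, Pi.sub_apply]; ring
  have hres₀ : ∀ i, y i - (F *ᵥ β₀) i = u i := fun i => by
    simp only [hy, Pi.add_apply]; ring
  have hexpand : ∑ i, (u i - d i) ^ 2 = ∑ i, u i ^ 2 - 2 * ∑ i, u i * d i + ∑ i, d i ^ 2 := by
    simp only [mul_sum, ← sum_sub_distrib, ← sum_add_distrib]
    exact sum_congr rfl fun i _ => by ring
  simp only [lassoCriterion, hres, hres₀, hexpand] at h
  linear_combination h

end

theorem stmt_4_general (n p : ℕ) (hn : 0 < n)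
    (f : Fin n → Fin p → ℝ) (β0 βh : Fin p → ℝ) (a v y : Fin n → ℝ)
    (cs lam c : ℝ) (hc : 1 < c) (hcs : 0 ≤ cs)
    (hy : ∀ i, y i = (∑ j, f i j * β0 j) + a i + v i)
    (ha : (1/(n:ℝ)) * ∑ i, (a i)^2 ≤ cs^2)
    (hlam : c * ((n:ℝ) * ⨆ j, |(2/(n:ℝ)) * ∑ i, f i j * v i|) ≤ lam)
    (hmin : ∀ β : Fin p → ℝ,
      (1/(n:ℝ)) * (∑ i, (y i - ∑ j, f i j * βh j)^2) + (lam/(n:ℝ)) * ∑ j, |βh j|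
        ≤ (1/(n:ℝ)) * (∑ i, (y i - ∑ j, f i j * β j)^2) + (lam/(n:ℝ)) * ∑ j, |β j|) :
    (1/(n:ℝ)) * ∑ i, (∑ j, f i j * (βh j - β0 j))^2
      ≤ (1 + 1/c) * (lam/(n:ℝ)) *
            (∑ j ∈ Finset.univ.filter (fun j => β0 j ≠ 0), |βh j - β0 j|)
        - (1 - 1/c) * (lam/(n:ℝ)) *
            (∑ j ∈ (Finset.univ.filter (fun j => β0 j ≠ 0))ᶜ, |βh j - β0 j|)
        + 2 * cs * Real.sqrt ((1/(n:ℝ)) * ∑ i, (∑ j, f i j * (βh j - β0 j))^2) := by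
  set T := univ.filter fun j => β0 j ≠ 0
  set M := ⨆ j, |(2/(n:ℝ)) * ∑ i, f i j * v i|
  have hn' : (0:ℝ) < n := by exact_mod_cast hn
  have hM : 0 ≤ M := Real.iSup_nonneg fun _ => abs_nonneg _
  have hlam₀ : 0 ≤ lam := (mul_nonneg (by linarith) (mul_nonneg hn'.le hM)).trans hlam
  have basic := mul_sum_sq_mulVec_sub_le_of_lassoCriterion_le f β0 βh (u := a + v)
    (funext fun i => by simp only [hy, Pi.add_apply, mulVec, dotProduct]; ring) (hmin β0)
  simp only [Pi.add_apply, add_mul, sum_add_distrib] at basic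
  set d := f *ᵥ (βh - β0)
  have hd : ∀ i, ∑ j, f i j * (βh j - β0 j) = d i := fun i => rfl
  simp only [hd]
  have approx := mul_sum_mul_le_mul_sqrt a d (w := 1/n) (by positivity) hcs ha
  have noise : (2/n) * ∑ i, v i * d i ≤ lam / (c * n) * ∑ j, |βh j - β0 j| := calc
    (2/n) * ∑ i, v i * d i = (βh - β0) ⬝ᵥ fun j => (2/n) * ∑ i, f i j * v i :=
      mul_dotProduct_mulVec f v _ _
    _ ≤ M * ∑ j, |βh j - β0 j| := dotProduct_le_iSup_abs_mul_sum_abs _ _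
    _ ≤ lam / (c * n) * ∑ j, |βh j - β0 j| := by
      gcongr; rw [le_div_iff₀ (by positivity)]; linarith
  rw [← sum_add_sum_compl T] at noise
  have penalty := sum_abs_sub_sum_abs_le_of_eq_zero_off β0 βh T (by simp [T])
  linear_combination basic + 2 * approx + noise + (lam / n) * penalty

/-- Basic LASSO inequality: if `β̂` minimizes the LASSO criterion and `λ ≥ c·n‖S‖_∞`
with `c > 1`, then for `δ = β̂ - β_0`,
`‖f'δ‖²_{2,n} ≤ (1+1/c)(λ/n)‖δ_T‖₁ - (1-1/c)(λ/n)‖δ_{T^c}‖₁ + 2 c_s ‖f'δ‖_{2,n}`. -/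
theorem stmt_4 (n p : ℕ) (hn : 0 < n) (hp : 0 < p)
    (f : Fin n → Fin p → ℝ) (β0 βh : Fin p → ℝ) (a v y : Fin n → ℝ)
    (cs lam c : ℝ) (hc : 1 < c) (hcs : 0 ≤ cs)
    (hy : ∀ i, y i = (∑ j, f i j * β0 j) + a i + v i)
    (ha : (1/(n:ℝ)) * ∑ i, (a i)^2 ≤ cs^2)
    (hlam : c * ((n:ℝ) * ⨆ j, |(2/(n:ℝ)) * ∑ i, f i j * v i|) ≤ lam)
    (hmin : ∀ β : Fin p → ℝ,
      (1/(n:ℝ)) * (∑ i, (y i - ∑ j, f i j * βh j)^2) + (lam/(n:ℝ)) * ∑ j, |βh j|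
        ≤ (1/(n:ℝ)) * (∑ i, (y i - ∑ j, f i j * β j)^2) + (lam/(n:ℝ)) * ∑ j, |β j|) :
    (1/(n:ℝ)) * ∑ i, (∑ j, f i j * (βh j - β0 j))^2
      ≤ (1 + 1/c) * (lam/(n:ℝ)) *
            (∑ j ∈ Finset.univ.filter (fun j => β0 j ≠ 0), |βh j - β0 j|)
        - (1 - 1/c) * (lam/(n:ℝ)) *
            (∑ j ∈ (Finset.univ.filter (fun j => β0 j ≠ 0))ᶜ, |βh j - β0 j|)
        + 2 * cs * Real.sqrt ((1/(n:ℝ)) * ∑ i, (∑ j, f i j * (βh j - β0 j))^2) :=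
  stmt_4_general n p hn f β0 βh a v y cs lam c hc hcs hy ha hlam hmin
end

section
/- LASSO cone membership: under the basic LASSO inequality with λ ≥ c·n‖S‖_∞, c > 1, the estimation error δ = β̂ - β_0 satisfies either ‖f_i'δ‖_{2,n} ≤ 2c_s or ‖δ_{T^c}‖_1 ≤ c_0‖δ_T‖_1, where c_0 = (c+1)/(c-1). -/
/-!
Comparing the objective at `β̂` with its value at `β₀` and expanding the squares leaves
`‖f'δ‖²_{2,n}` bounded by the cross term `2 E_n[(a + v) f'δ]` plus `(λ/n)(‖β₀‖₁ - ‖β̂‖₁)`.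
The noise part of the cross term is `S'δ ≤ ‖S‖_∞ ‖δ‖₁ ≤ (λ/(cn)) ‖δ‖₁`, the approximation part is
at most `2 c_s ‖f'δ‖_{2,n}` by Cauchy–Schwarz, and since `β₀` vanishes off `T` the penalty
difference is at most `‖δ_T‖₁ - ‖δ_{T^c}‖₁`. If `‖f'δ‖_{2,n} > 2 c_s` the term `2 c_s ‖f'δ‖_{2,n}`
is absorbed by the left side, so `(1 + 1/c)‖δ_T‖₁ - (1 - 1/c)‖δ_{T^c}‖₁` must be positive.
-/

open Finset

section

variable {ι κ : Type*}

theorem nonneg_of_mul_mul_iSup_abs_le {c m lam : ℝ} (hc : 0 ≤ c) (hm : 0 ≤ m) (s : κ → ℝ)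
    (h : c * (m * ⨆ j, |s j|) ≤ lam) : 0 ≤ lam :=
  (mul_nonneg hc (mul_nonneg hm (Real.iSup_nonneg fun _ => abs_nonneg _))).trans h

variable [Fintype κ]

theorem sum_abs_sub_sum_abs_le_of_support [DecidableEq κ] (β₀ β : κ → ℝ) :
    ∑ j, |β₀ j| - ∑ j, |β j| ≤
      ∑ j ∈ univ.filter (fun j => β₀ j ≠ 0), |β j - β₀ j|
        - ∑ j ∈ (univ.filter (fun j => β₀ j ≠ 0))ᶜ, |β j - β₀ j| := by
  set T := univ.filter (fun j => β₀ j ≠ 0)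
  have on_support : ∑ j ∈ T, |β₀ j| - ∑ j ∈ T, |β j| ≤ ∑ j ∈ T, |β j - β₀ j| := by
    rw [← sum_sub_distrib]
    exact sum_le_sum fun j _ => abs_sub_comm (β j) (β₀ j) ▸ abs_sub_abs_le_abs_sub _ _
  have off_support : ∑ j ∈ Tᶜ, |β₀ j| - ∑ j ∈ Tᶜ, |β j| = -∑ j ∈ Tᶜ, |β j - β₀ j| := by
    rw [← sum_sub_distrib, ← sum_neg_distrib]
    refine sum_congr rfl fun j hj => ?_
    have hβ₀ : β₀ j = 0 := by simpa [T] using hj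
    simp [hβ₀]
  rw [← sum_add_sum_compl T fun j => |β₀ j|, ← sum_add_sum_compl T fun j => |β j|]
  linarith

theorem sum_mul_le_iSup_abs_mul_sum_abs (x s : κ → ℝ) :
    ∑ j, x j * s j ≤ (⨆ j, |s j|) * ∑ j, |x j| := by
  rw [mul_sum]
  refine sum_le_sum fun j _ => ?_
  calc x j * s j ≤ |x j| * |s j| := (le_abs_self _).trans (abs_mul _ _).le
    _ ≤ (⨆ j, |s j|) * |x j| := by
      rw [mul_comm]
      exact mul_le_mul_of_nonneg_right
        (le_ciSup (f := fun j => |s j|) (Set.finite_range _).bddAbove j) (abs_nonneg _)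

theorem mul_sum_mul_le_sqrt_mul_sqrt (s : Finset ι) {w : ℝ} (hw : 0 ≤ w) (f g : ι → ℝ) :
    w * ∑ i ∈ s, f i * g i ≤ √(w * ∑ i ∈ s, f i ^ 2) * √(w * ∑ i ∈ s, g i ^ 2) := by
  calc w * ∑ i ∈ s, f i * g i ≤ w * (√(∑ i ∈ s, f i ^ 2) * √(∑ i ∈ s, g i ^ 2)) :=
        mul_le_mul_of_nonneg_left (Real.sum_mul_le_sqrt_mul_sqrt s f g) hw
    _ = √(w * ∑ i ∈ s, f i ^ 2) * √(w * ∑ i ∈ s, g i ^ 2) := by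
      rw [Real.sqrt_mul hw, Real.sqrt_mul hw]
      nth_rewrite 1 [← Real.mul_self_sqrt hw]
      ring

theorem mul_sum_sq_le_of_mul_sum_sub_sq_add_le (s : Finset ι) {w L L₀ : ℝ} {u g : ι → ℝ}
    (h : w * ∑ i ∈ s, (u i - g i) ^ 2 + L ≤ w * ∑ i ∈ s, u i ^ 2 + L₀) :
    w * ∑ i ∈ s, g i ^ 2 ≤ 2 * w * ∑ i ∈ s, u i * g i + (L₀ - L) := by
  have expand : ∑ i ∈ s, (u i - g i) ^ 2
      = ∑ i ∈ s, u i ^ 2 - 2 * ∑ i ∈ s, u i * g i + ∑ i ∈ s, g i ^ 2 := by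
    simp only [sub_sq, sum_add_distrib, sum_sub_distrib, mul_sum, mul_assoc]
  rw [expand] at h
  linarith

theorem le_two_mul_or_cone_of_sq_le {r s L A B c : ℝ} (hc : 1 < c) (hs : 0 ≤ s) (hL : 0 ≤ L)
    (h : r ^ 2 ≤ (1 + 1 / c) * L * A - (1 - 1 / c) * L * B + 2 * s * r) :
    r ≤ 2 * s ∨ B ≤ (c + 1) / (c - 1) * A := by
  refine or_iff_not_imp_left.mpr fun hr => ?_
  push Not at hr
  have hpos : 0 < L * ((1 + 1 / c) * A - (1 - 1 / c) * B) := by nlinarith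
  have hcone : (1 - 1 / c) * B < (1 + 1 / c) * A := by
    linarith [pos_of_mul_pos_right hpos hL]
  rw [div_mul_eq_mul_div, le_div_iff₀ (by linarith)]
  have hc0 : 0 < c := by linarith
  field_simp at hcone
  linarith

theorem lasso_basic_inequality [DecidableEq κ] {n : ℕ} (hn : 0 < n) {f : Fin n → κ → ℝ}
    {β₀ β : κ → ℝ} {a v y : Fin n → ℝ} {cs lam c : ℝ} (hc : 0 < c) (hcs : 0 ≤ cs)
    (hy : ∀ i, y i = (∑ j, f i j * β₀ j) + a i + v i)
    (ha : (1 / (n : ℝ)) * ∑ i, (a i) ^ 2 ≤ cs ^ 2)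
    (hlam : c * ((n : ℝ) * ⨆ j, |(2 / (n : ℝ)) * ∑ i, f i j * v i|) ≤ lam)
    (hopt : (1 / (n : ℝ)) * (∑ i, (y i - ∑ j, f i j * β j) ^ 2) + (lam / n) * ∑ j, |β j|
        ≤ (1 / (n : ℝ)) * (∑ i, (y i - ∑ j, f i j * β₀ j) ^ 2) + (lam / n) * ∑ j, |β₀ j|) :
    (1 / (n : ℝ)) * ∑ i, (∑ j, f i j * (β j - β₀ j)) ^ 2 ≤
      (1 + 1 / c) * (lam / n) * ∑ j ∈ univ.filter (fun j => β₀ j ≠ 0), |β j - β₀ j|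
        - (1 - 1 / c) * (lam / n) * ∑ j ∈ (univ.filter (fun j => β₀ j ≠ 0))ᶜ, |β j - β₀ j|
        + 2 * cs * √((1 / (n : ℝ)) * ∑ i, (∑ j, f i j * (β j - β₀ j)) ^ 2) := by
  set T := univ.filter (fun j => β₀ j ≠ 0)
  set δ := fun j => β j - β₀ j
  set g := fun i => ∑ j, f i j * δ j
  have hres : ∀ i, y i - ∑ j, f i j * β j = (a i + v i) - g i := fun i => by
    simp only [g, δ, hy, mul_sub, sum_sub_distrib]; ring
  have hres₀ : ∀ i, y i - ∑ j, f i j * β₀ j = a i + v i := fun i => by rw [hy]; ring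
  simp only [hres, hres₀] at hopt
  have excess := mul_sum_sq_le_of_mul_sum_sub_sq_add_le univ hopt
  simp only [add_mul, sum_add_distrib] at excess
  have noise : 2 * (1 / (n : ℝ)) * ∑ i, v i * g i
      ≤ (1 / c) * (lam / n) * (∑ j ∈ T, |δ j| + ∑ j ∈ Tᶜ, |δ j|) := by
    set M := ⨆ j, |(2 / (n : ℝ)) * ∑ i, f i j * v i|
    have hM : M ≤ lam / (c * n) := by
      rw [le_div_iff₀ (by positivity)]
      linarith
    calc 2 * (1 / (n : ℝ)) * ∑ i, v i * g i
        = ∑ j, δ j * ((2 / (n : ℝ)) * ∑ i, f i j * v i) := by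
          simp only [g, mul_sum]
          rw [sum_comm]
          refine sum_congr rfl fun j _ => sum_congr rfl fun i _ => ?_
          ring
      _ ≤ M * ∑ j, |δ j| := sum_mul_le_iSup_abs_mul_sum_abs _ _
      _ ≤ lam / (c * n) * ∑ j, |δ j| :=
          mul_le_mul_of_nonneg_right hM (sum_nonneg fun j _ => abs_nonneg _)
      _ = (1 / c) * (lam / n) * (∑ j ∈ T, |δ j| + ∑ j ∈ Tᶜ, |δ j|) := by
          rw [sum_add_sum_compl]
          field_simp
  have approx : 2 * (1 / (n : ℝ)) * ∑ i, a i * g i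
      ≤ 2 * cs * √((1 / (n : ℝ)) * ∑ i, g i ^ 2) := by
    have hcs' : √((1 / (n : ℝ)) * ∑ i, a i ^ 2) ≤ cs :=
      (Real.sqrt_le_sqrt ha).trans_eq (Real.sqrt_sq hcs)
    have cauchy_schwarz :=
      mul_sum_mul_le_sqrt_mul_sqrt univ (w := 1 / (n : ℝ)) (by positivity) a g
    have scaled :=
      mul_le_mul_of_nonneg_right hcs' (Real.sqrt_nonneg ((1 / (n : ℝ)) * ∑ i, g i ^ 2))
    linarith
  have penalty : (lam / n) * (∑ j, |β₀ j| - ∑ j, |β j|)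
      ≤ (lam / n) * (∑ j ∈ T, |δ j| - ∑ j ∈ Tᶜ, |δ j|) := by
    have hlam0 := nonneg_of_mul_mul_iSup_abs_le hc.le n.cast_nonneg _ hlam
    exact mul_le_mul_of_nonneg_left (sum_abs_sub_sum_abs_le_of_support β₀ β) (by positivity)
  linarith

end

theorem stmt_5_general (n p : ℕ) (hn : 0 < n)
    (f : Fin n → Fin p → ℝ) (β0 βh : Fin p → ℝ) (a v y : Fin n → ℝ)
    (cs lam c : ℝ) (hc : 1 < c) (hcs : 0 ≤ cs)
    (hy : ∀ i, y i = (∑ j, f i j * β0 j) + a i + v i)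
    (ha : (1/(n:ℝ)) * ∑ i, (a i)^2 ≤ cs^2)
    (hlam : c * ((n:ℝ) * ⨆ j, |(2/(n:ℝ)) * ∑ i, f i j * v i|) ≤ lam)
    (hmin : ∀ β : Fin p → ℝ,
      (1/(n:ℝ)) * (∑ i, (y i - ∑ j, f i j * βh j)^2) + (lam/(n:ℝ)) * ∑ j, |βh j|
        ≤ (1/(n:ℝ)) * (∑ i, (y i - ∑ j, f i j * β j)^2) + (lam/(n:ℝ)) * ∑ j, |β j|) :
    Real.sqrt ((1/(n:ℝ)) * ∑ i, (∑ j, f i j * (βh j - β0 j))^2) ≤ 2 * cs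
    ∨ (∑ j ∈ (Finset.univ.filter (fun j => β0 j ≠ 0))ᶜ, |βh j - β0 j|)
        ≤ (c+1)/(c-1) * ∑ j ∈ Finset.univ.filter (fun j => β0 j ≠ 0), |βh j - β0 j| := by
  have hlam0 := nonneg_of_mul_mul_iSup_abs_le (by linarith) n.cast_nonneg _ hlam
  have basic := lasso_basic_inequality hn (by linarith) hcs hy ha hlam (hmin β0)
  refine le_two_mul_or_cone_of_sq_le (L := lam / n) hc hcs (by positivity) ?_
  rwa [Real.sq_sqrt (by positivity)]

/-- LASSO cone membership: under the LASSO optimality and `λ ≥ c·n‖S‖_∞`, `c > 1`, the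
error `δ = β̂ - β_0` satisfies either `‖f'δ‖_{2,n} ≤ 2 c_s` or
`‖δ_{T^c}‖₁ ≤ c₀ ‖δ_T‖₁` with `c₀ = (c+1)/(c-1)`. -/
theorem stmt_5 (n p : ℕ) (hn : 0 < n) (hp : 0 < p)
    (f : Fin n → Fin p → ℝ) (β0 βh : Fin p → ℝ) (a v y : Fin n → ℝ)
    (cs lam c : ℝ) (hc : 1 < c) (hcs : 0 ≤ cs)
    (hy : ∀ i, y i = (∑ j, f i j * β0 j) + a i + v i)
    (ha : (1/(n:ℝ)) * ∑ i, (a i)^2 ≤ cs^2)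
    (hlam : c * ((n:ℝ) * ⨆ j, |(2/(n:ℝ)) * ∑ i, f i j * v i|) ≤ lam)
    (hmin : ∀ β : Fin p → ℝ,
      (1/(n:ℝ)) * (∑ i, (y i - ∑ j, f i j * βh j)^2) + (lam/(n:ℝ)) * ∑ j, |βh j|
        ≤ (1/(n:ℝ)) * (∑ i, (y i - ∑ j, f i j * β j)^2) + (lam/(n:ℝ)) * ∑ j, |β j|) :
    Real.sqrt ((1/(n:ℝ)) * ∑ i, (∑ j, f i j * (βh j - β0 j))^2) ≤ 2 * cs
    ∨ (∑ j ∈ (Finset.univ.filter (fun j => β0 j ≠ 0))ᶜ, |βh j - β0 j|)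
        ≤ (c+1)/(c-1) * ∑ j ∈ Finset.univ.filter (fun j => β0 j ≠ 0), |βh j - β0 j| :=
  stmt_5_general n p hn f β0 βh a v y cs lam c hc hcs hy ha hlam hmin
end

section
/- LASSO prediction rate (deterministic form): if λ ≥ c·n‖S‖_∞ with c > 1 and the restricted eigenvalue κ_{c_0} > 0 with c_0 = (c+1)/(c-1), then the LASSO error δ = β̂ - β_0 satisfies ‖f_i'δ‖_{2,n} ≤ 2λ√s/(n·κ_{c_0}) + 2c_s. -/
open Finset

/-!
Comparing the LASSO objective at `β̂` and at `β₀` gives the basic inequality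
`‖Fδ‖² ≤ (2/n)⟨a + v, Fδ⟩ + (λ/n)(‖β₀‖₁ - ‖β̂‖₁)` for `δ = β̂ - β₀`. Cauchy–Schwarz bounds the
approximation-error term by `2 c_s ‖Fδ‖`, ℓ∞/ℓ1 duality bounds the noise term by
`(λ/(cn))‖δ‖₁`, and `‖β₀‖₁ - ‖β̂‖₁ ≤ ‖δ_T‖₁ - ‖δ_{Tᶜ}‖₁`. If `δ` lies outside the cone
`‖δ_{Tᶜ}‖₁ ≤ c₀‖δ_T‖₁` the penalty terms add up to something nonpositive; inside it the restricted
eigenvalue gives `‖δ_T‖₁ ≤ √s ‖Fδ‖/κ`. Either way `‖Fδ‖² ≤ (2λ√s/(nκ) + 2c_s)‖Fδ‖`.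
-/

section

variable {ι : Type*} [Fintype ι]

theorem mul_sum_mul_le_of_mul_sum_sq_le {w b : ℝ} (hw : 0 ≤ w) (hb : 0 ≤ b) {x : ι → ℝ}
    (hx : w * ∑ i, x i ^ 2 ≤ b ^ 2) (y : ι → ℝ) :
    w * ∑ i, x i * y i ≤ b * √(w * ∑ i, y i ^ 2) := by
  have hxb : √(w * ∑ i, x i ^ 2) ≤ b := (Real.sqrt_le_sqrt hx).trans_eq (Real.sqrt_sq hb)
  calc w * ∑ i, x i * y i ≤ w * (√(∑ i, x i ^ 2) * √(∑ i, y i ^ 2)) :=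
        mul_le_mul_of_nonneg_left (Real.sum_mul_le_sqrt_mul_sqrt _ x y) hw
    _ = (√w * √w) * (√(∑ i, x i ^ 2) * √(∑ i, y i ^ 2)) := by rw [Real.mul_self_sqrt hw]
    _ = √(w * ∑ i, x i ^ 2) * √(w * ∑ i, y i ^ 2) := by
        rw [Real.sqrt_mul hw, Real.sqrt_mul hw]; ring
    _ ≤ b * √(w * ∑ i, y i ^ 2) := mul_le_mul_of_nonneg_right hxb (Real.sqrt_nonneg _)

theorem sum_mul_le_iSup_abs_mul_sum_abs_s6 (g δ : ι → ℝ) :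
    ∑ j, g j * δ j ≤ (⨆ j, |g j|) * ∑ j, |δ j| := by
  rw [mul_sum]
  refine sum_le_sum fun j _ => ?_
  calc g j * δ j ≤ |g j| * |δ j| := by rw [← abs_mul]; exact le_abs_self _
    _ ≤ (⨆ j, |g j|) * |δ j| :=
        mul_le_mul_of_nonneg_right
          (le_ciSup (f := fun j => |g j|) (Set.finite_range _).bddAbove j) (abs_nonneg _)

theorem sum_abs_sub_sum_abs_le [DecidableEq ι] {T : Finset ι} {β₀ β : ι → ℝ}
    (hβ₀ : ∀ j ∉ T, β₀ j = 0) :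
    ∑ j, |β₀ j| - ∑ j, |β j| ≤ ∑ j ∈ T, |β j - β₀ j| - ∑ j ∈ Tᶜ, |β j - β₀ j| := by
  rw [← sum_add_sum_compl T, ← sum_add_sum_compl T fun j => |β j|]
  have on_T : ∑ j ∈ T, |β₀ j| - ∑ j ∈ T, |β j| ≤ ∑ j ∈ T, |β j - β₀ j| := by
    rw [← sum_sub_distrib]
    exact sum_le_sum fun j _ => (abs_sub_abs_le_abs_sub _ _).trans_eq (abs_sub_comm _ _)
  have off_T : ∀ j ∈ Tᶜ, β₀ j = 0 := fun j hj => hβ₀ j (mem_compl.mp hj)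
  have truth_off_T : ∑ j ∈ Tᶜ, |β₀ j| = 0 :=
    sum_eq_zero fun j hj => by rw [off_T j hj, abs_zero]
  have error_off_T : ∑ j ∈ Tᶜ, |β j - β₀ j| = ∑ j ∈ Tᶜ, |β j| :=
    sum_congr rfl fun j hj => by rw [off_T j hj, sub_zero]
  linarith

theorem sum_mul_sum_comm {m : Type*} [Fintype m]
    (f : m → ι → ℝ) (v : m → ℝ) (δ : ι → ℝ) :
    ∑ i, v i * ∑ j, f i j * δ j = ∑ j, (∑ i, f i j * v i) * δ j := by
  simp only [mul_sum, sum_mul]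
  rw [sum_comm]
  exact sum_congr rfl fun j _ => sum_congr rfl fun i _ => by ring

theorem two_div_mul_sum_mul_le_of_iSup_le {n : ℕ} (hn : 0 < n)
    {c lam : ℝ} (hc : 0 < c) (f : Fin n → ι → ℝ) (v : Fin n → ℝ) (δ : ι → ℝ)
    (hlam : c * ((n:ℝ) * ⨆ j, |(2/(n:ℝ)) * ∑ i, f i j * v i|) ≤ lam) :
    (2/(n:ℝ)) * ∑ i, v i * ∑ j, f i j * δ j ≤ lam / (c * n) * ∑ j, |δ j| := by
  have hsup : (⨆ j, |(2/(n:ℝ)) * ∑ i, f i j * v i|) ≤ lam / (c * n) := by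
    rw [le_div_iff₀ (by positivity)]; linarith
  rw [sum_mul_sum_comm, mul_sum]
  simp only [← mul_assoc]
  exact (sum_mul_le_iSup_abs_mul_sum_abs_s6 _ _).trans
    (mul_le_mul_of_nonneg_right hsup (sum_nonneg fun j _ => abs_nonneg _))

theorem lasso_basic_inequality_s6 {n : ℕ} (f : Fin n → ι → ℝ)
    (β₀ β : ι → ℝ) (e y : Fin n → ℝ) (lam : ℝ) (hy : ∀ i, y i = ∑ j, f i j * β₀ j + e i)
    (hmin : (1/(n:ℝ)) * (∑ i, (y i - ∑ j, f i j * β j)^2) + (lam/(n:ℝ)) * ∑ j, |β j|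
        ≤ (1/(n:ℝ)) * (∑ i, (y i - ∑ j, f i j * β₀ j)^2) + (lam/(n:ℝ)) * ∑ j, |β₀ j|) :
    (1/(n:ℝ)) * ∑ i, (∑ j, f i j * (β j - β₀ j))^2
      ≤ (2/(n:ℝ)) * ∑ i, e i * ∑ j, f i j * (β j - β₀ j)
        + (lam/(n:ℝ)) * (∑ j, |β₀ j| - ∑ j, |β j|) := by
  set d : Fin n → ℝ := fun i => ∑ j, f i j * (β j - β₀ j)
  have residual : ∀ i, y i - ∑ j, f i j * β j = e i - d i := fun i => by
    simp only [d, hy i, mul_sub, sum_sub_distrib]; ring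
  have expand : ∑ i, (y i - ∑ j, f i j * β j)^2
      = ∑ i, e i ^ 2 - 2 * ∑ i, e i * d i + ∑ i, d i ^ 2 := by
    simp only [residual, mul_sum, ← sum_sub_distrib, ← sum_add_distrib]
    exact sum_congr rfl fun i _ => by ring
  have at_truth : ∑ i, (y i - ∑ j, f i j * β₀ j)^2 = ∑ i, e i ^ 2 :=
    sum_congr rfl fun i _ => by rw [hy i]; ring
  rw [expand, at_truth] at hmin
  change (1/(n:ℝ)) * ∑ i, d i ^ 2 ≤ (2/(n:ℝ)) * ∑ i, e i * d i + _
  linear_combination hmin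

end

/-- Applied with `A = ‖δ_T‖₁`, `B = ‖δ_{Tᶜ}‖₁` and `r = √s ‖Fδ‖`. -/
theorem add_div_add_sub_le_of_cone {A B c κ r : ℝ} (hc : 1 < c) (hκ : 0 < κ) (hA : 0 ≤ A)
    (hB : 0 ≤ B) (hr : 0 ≤ r) (hRE : B ≤ (c + 1) / (c - 1) * A → κ * A ≤ r) :
    (A + B) / c + (A - B) ≤ 2 * r / κ := by
  have hc0 : 0 < c := by linarith
  have hcr : 0 ≤ 2 * r / κ := by positivity
  by_cases hcone : B ≤ (c + 1) / (c - 1) * A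
  · have hAr : A ≤ r / κ := by rw [le_div_iff₀ hκ]; linarith [hRE hcone]
    have hdiv : (A + B) / c ≤ A + B := div_le_self (by linarith) hc.le
    linarith [show 2 * r / κ = 2 * (r / κ) by ring]
  · rw [not_le, div_mul_eq_mul_div, div_lt_iff₀ (by linarith)] at hcone
    have hneg : (A + B) / c + (A - B) = ((A + B) + c * (A - B)) / c := by field_simp
    have hnum : (A + B) + c * (A - B) ≤ 0 := by nlinarith
    rw [hneg]
    exact (div_nonpos_of_nonpos_of_nonneg hnum hc0.le).trans hcr

theorem stmt_6_general (n p : ℕ) (hn : 0 < n)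
    (f : Fin n → Fin p → ℝ) (β0 βh : Fin p → ℝ) (a v y : Fin n → ℝ)
    (cs lam c κ : ℝ) (hc : 1 < c) (hcs : 0 ≤ cs) (hlam0 : 0 ≤ lam) (hκ : 0 < κ)
    (hy : ∀ i, y i = (∑ j, f i j * β0 j) + a i + v i)
    (ha : (1/(n:ℝ)) * ∑ i, (a i)^2 ≤ cs^2)
    (hlam : c * ((n:ℝ) * ⨆ j, |(2/(n:ℝ)) * ∑ i, f i j * v i|) ≤ lam)
    (hmin : ∀ β : Fin p → ℝ,
      (1/(n:ℝ)) * (∑ i, (y i - ∑ j, f i j * βh j)^2) + (lam/(n:ℝ)) * ∑ j, |βh j|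
        ≤ (1/(n:ℝ)) * (∑ i, (y i - ∑ j, f i j * β j)^2) + (lam/(n:ℝ)) * ∑ j, |β j|)
    (hRE : ∀ δ : Fin p → ℝ, δ ≠ 0 →
      (∑ j ∈ (Finset.univ.filter (fun j => β0 j ≠ 0))ᶜ, |δ j|)
        ≤ (c+1)/(c-1) * ∑ j ∈ Finset.univ.filter (fun j => β0 j ≠ 0), |δ j| →
      κ * (∑ j ∈ Finset.univ.filter (fun j => β0 j ≠ 0), |δ j|)
        ≤ Real.sqrt ((Finset.univ.filter (fun j => β0 j ≠ 0)).card)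
            * Real.sqrt ((1/(n:ℝ)) * ∑ i, (∑ j, f i j * δ j)^2)) :
    Real.sqrt ((1/(n:ℝ)) * ∑ i, (∑ j, f i j * (βh j - β0 j))^2)
      ≤ 2 * lam * Real.sqrt ((Finset.univ.filter (fun j => β0 j ≠ 0)).card) / ((n:ℝ) * κ)
        + 2 * cs := by
  set T := univ.filter fun j => β0 j ≠ 0
  set d : Fin n → ℝ := fun i => ∑ j, f i j * (βh j - β0 j)
  set Q := √((1/(n:ℝ)) * ∑ i, d i ^ 2)
  set A := ∑ j ∈ T, |βh j - β0 j|
  set B := ∑ j ∈ Tᶜ, |βh j - β0 j|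
  set R := 2 * lam * √(#T : ℝ) / ((n:ℝ) * κ) + 2 * cs
  have hR : 0 ≤ R := by positivity
  have basic := lasso_basic_inequality_s6 f β0 βh (fun i => a i + v i) y lam
    (fun i => by rw [hy i]; ring) (hmin β0)
  simp only [add_mul, sum_add_distrib, mul_add] at basic
  have approx : (2/(n:ℝ)) * ∑ i, a i * d i ≤ 2 * cs * Q := by
    linarith [mul_sum_mul_le_of_mul_sum_sq_le (by positivity) hcs ha d,
      show (2/(n:ℝ)) * ∑ i, a i * d i = 2 * ((1/n) * ∑ i, a i * d i) by ring]
  have noise : (2/(n:ℝ)) * ∑ i, v i * d i ≤ lam / (c * n) * (A + B) := by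
    rw [sum_add_sum_compl]
    exact two_div_mul_sum_mul_le_of_iSup_le hn (by linarith) f v _ hlam
  have l1 : ∑ j, |β0 j| - ∑ j, |βh j| ≤ A - B :=
    sum_abs_sub_sum_abs_le fun j hj => by simpa [T] using hj
  have cone : (A + B) / c + (A - B) ≤ 2 * (√(#T : ℝ) * Q) / κ := by
    refine add_div_add_sub_le_of_cone hc hκ (sum_nonneg fun j _ => abs_nonneg _)
      (sum_nonneg fun j _ => abs_nonneg _) (by positivity) fun hcone => ?_
    by_cases hδ : (fun j => βh j - β0 j) = 0
    · have hA : A = 0 := sum_eq_zero fun j _ => by simp [show βh j - β0 j = 0 from congrFun hδ j]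
      rw [hA, mul_zero]; positivity
    · exact hRE _ hδ hcone
  have quadratic : Q ^ 2 ≤ R * Q := calc
    Q ^ 2 = (1/(n:ℝ)) * ∑ i, d i ^ 2 := Real.sq_sqrt (by positivity)
    _ ≤ 2 * cs * Q + lam / (c * n) * (A + B) + lam / n * (A - B) := by
        linarith [mul_le_mul_of_nonneg_left l1 (by positivity : 0 ≤ lam / n)]
    _ = 2 * cs * Q + lam / n * ((A + B) / c + (A - B)) := by field_simp; ring
    _ ≤ 2 * cs * Q + lam / n * (2 * (√(#T : ℝ) * Q) / κ) := by gcongr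
    _ = R * Q := by simp only [R]; field_simp; ring
  nlinarith

/-- LASSO prediction rate (deterministic form): if `λ ≥ c·n‖S‖_∞` with `c > 1` and the
restricted eigenvalue `κ = κ_{c₀} > 0` with `c₀ = (c+1)/(c-1)`, then the LASSO error
`δ = β̂ - β_0` satisfies `‖f'δ‖_{2,n} ≤ 2λ√s/(n κ) + 2 c_s`, where `s = |T|`. -/
theorem stmt_6 (n p : ℕ) (hn : 0 < n) (hp : 0 < p)
    (f : Fin n → Fin p → ℝ) (β0 βh : Fin p → ℝ) (a v y : Fin n → ℝ)
    (cs lam c κ : ℝ) (hc : 1 < c) (hcs : 0 ≤ cs) (hlam0 : 0 ≤ lam) (hκ : 0 < κ)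
    (hy : ∀ i, y i = (∑ j, f i j * β0 j) + a i + v i)
    (ha : (1/(n:ℝ)) * ∑ i, (a i)^2 ≤ cs^2)
    (hlam : c * ((n:ℝ) * ⨆ j, |(2/(n:ℝ)) * ∑ i, f i j * v i|) ≤ lam)
    (hmin : ∀ β : Fin p → ℝ,
      (1/(n:ℝ)) * (∑ i, (y i - ∑ j, f i j * βh j)^2) + (lam/(n:ℝ)) * ∑ j, |βh j|
        ≤ (1/(n:ℝ)) * (∑ i, (y i - ∑ j, f i j * β j)^2) + (lam/(n:ℝ)) * ∑ j, |β j|)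
    (hRE : ∀ δ : Fin p → ℝ, δ ≠ 0 →
      (∑ j ∈ (Finset.univ.filter (fun j => β0 j ≠ 0))ᶜ, |δ j|)
        ≤ (c+1)/(c-1) * ∑ j ∈ Finset.univ.filter (fun j => β0 j ≠ 0), |δ j| →
      κ * (∑ j ∈ Finset.univ.filter (fun j => β0 j ≠ 0), |δ j|)
        ≤ Real.sqrt ((Finset.univ.filter (fun j => β0 j ≠ 0)).card)
            * Real.sqrt ((1/(n:ℝ)) * ∑ i, (∑ j, f i j * δ j)^2)) :
    Real.sqrt ((1/(n:ℝ)) * ∑ i, (∑ j, f i j * (βh j - β0 j))^2)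
      ≤ 2 * lam * Real.sqrt ((Finset.univ.filter (fun j => β0 j ≠ 0)).card) / ((n:ℝ) * κ)
        + 2 * cs :=
  stmt_6_general n p hn f β0 βh a v y cs lam c κ hc hcs hlam0 hκ hy ha hlam hmin hRE
end
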